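/- Let σ, β, A₁, B₁ be real d×d matrices and κ ∈ ℝ. With H = [[σ, −κ·I],[−β, −σᵀ]], Φᵢⱼ(τ) the d×d blocks of exp(−τ·H), X(τ) = Φ₁₁(τ) + Φ₁₂(τ)·A₁, and Y(τ) = Φ₂₁(τ) + Φ₂₂(τ)·A₁ as before, suppose X(τ) is invertible on an interval containing 0, and set A(τ) = Y(τ)·X(τ)⁻¹. Then the function B(τ) := (X(τ)⁻¹)ᵀ·B₁ is differentiable, satisfies B(0) = B₁, and solves the linear matrix ODE B'(τ) = σᵀ·B(τ) − κ·A(τ)ᵀ·B(τ). -/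

import Mathlib

/-! Since `exp(-τH)` solves `Φ' = -HΦ`, the block column `[X; Y] = exp(-τH)·[I; A₁]` satisfies
`X' = κY - σX`. Differentiating the inverse,
`(X⁻¹)' = -X⁻¹X'X⁻¹ = X⁻¹σ - κX⁻¹YX⁻¹`, and transposing and multiplying by `B₁` gives
`B' = σᵀB - κ(YX⁻¹)ᵀB`. Finally `X(0) = I`, so `B(0) = B₁`. -/

open NormedSpace Matrix

namespace Matrix

variable {α l m n o : Type*} [Fintype n] [Fintype o] [NonUnitalNonAssocSemiring α]

theorem toBlocks₁₁_mul (M : Matrix (l ⊕ m) (n ⊕ o) α) (N : Matrix (n ⊕ o) (l ⊕ m) α) :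
    (M * N).toBlocks₁₁ = M.toBlocks₁₁ * N.toBlocks₁₁ + M.toBlocks₁₂ * N.toBlocks₂₁ := by
  ext i j
  simp [mul_apply, Fintype.sum_sum_type, toBlocks₁₁, toBlocks₁₂, toBlocks₂₁]

theorem toBlocks₂₁_mul (M : Matrix (l ⊕ m) (n ⊕ o) α) (N : Matrix (n ⊕ o) (l ⊕ m) α) :
    (M * N).toBlocks₂₁ = M.toBlocks₂₁ * N.toBlocks₁₁ + M.toBlocks₂₂ * N.toBlocks₂₁ := by
  ext i j
  simp [mul_apply, Fintype.sum_sum_type, toBlocks₂₁, toBlocks₂₂, toBlocks₁₁]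

end Matrix

theorem HasDerivAt.linearMap_comp {𝕜 E F : Type*} [NontriviallyNormedField 𝕜] [CompleteSpace 𝕜]
    [NormedAddCommGroup E] [NormedSpace 𝕜 E] [FiniteDimensional 𝕜 E]
    [NormedAddCommGroup F] [NormedSpace 𝕜 F]
    {f : 𝕜 → E} {f' : E} {x : 𝕜} (L : E →ₗ[𝕜] F) (h : HasDerivAt f f' x) :
    HasDerivAt (fun u => L (f u)) (L f') x :=
  (LinearMap.toContinuousLinearMap L).hasFDerivAt.comp_hasDerivAt x h

section MatrixCalculus

attribute [local instance] Matrix.linftyOpNormedRing Matrix.linftyOpNormedAlgebra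

variable {𝕜 m n : Type*} [RCLike 𝕜] [Fintype m] [Fintype n] [DecidableEq m] [DecidableEq n]

theorem HasDerivAt.matrix_entry {f : 𝕜 → Matrix n n 𝕜} {f' : Matrix n n 𝕜} {x : 𝕜}
    (h : HasDerivAt f f' x) (i j : n) : HasDerivAt (fun u => f u i j) (f' i j) x :=
  h.linearMap_comp (entryLinearMap 𝕜 𝕜 i j)

theorem HasDerivAt.matrix_transpose {f : 𝕜 → Matrix n n 𝕜} {f' : Matrix n n 𝕜} {x : 𝕜}
    (h : HasDerivAt f f' x) : HasDerivAt (fun u => (f u)ᵀ) f'ᵀ x :=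
  h.linearMap_comp (transposeLinearEquiv n n 𝕜 𝕜).toLinearMap

theorem HasDerivAt.matrix_toBlocks₁₁ {f : 𝕜 → Matrix (m ⊕ n) (m ⊕ n) 𝕜}
    {f' : Matrix (m ⊕ n) (m ⊕ n) 𝕜} {x : 𝕜} (h : HasDerivAt f f' x) :
    HasDerivAt (fun u => (f u).toBlocks₁₁) f'.toBlocks₁₁ x :=
  h.linearMap_comp { toFun := toBlocks₁₁, map_add' := fun _ _ => rfl, map_smul' := fun _ _ => rfl }

theorem HasDerivAt.matrix_inv {f : 𝕜 → Matrix n n 𝕜} {f' : Matrix n n 𝕜} {x : 𝕜}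
    (h : HasDerivAt f f' x) (hf : IsUnit (f x)) :
    HasDerivAt (fun u => (f u)⁻¹) (-((f x)⁻¹ * f' * (f x)⁻¹)) x := by
  obtain ⟨U, hU⟩ := hf
  have hinv : HasFDerivAt Ring.inverse _ (f x) := hU ▸ hasFDerivAt_ringInverse (𝕜 := 𝕜) U
  simp only [nonsing_inv_eq_ringInverse, ← hU, Ring.inverse_unit]
  exact hinv.comp_hasDerivAt x h

theorem hasDerivAt_exp_smul_toBlocks (N : Matrix (m ⊕ n) (m ⊕ n) 𝕜) (A₁ : Matrix n m 𝕜) (t : 𝕜) :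
    HasDerivAt (fun u => (exp (u • N)).toBlocks₁₁ + (exp (u • N)).toBlocks₁₂ * A₁)
      (N.toBlocks₁₁ * ((exp (t • N)).toBlocks₁₁ + (exp (t • N)).toBlocks₁₂ * A₁) +
        N.toBlocks₁₂ * ((exp (t • N)).toBlocks₂₁ + (exp (t • N)).toBlocks₂₂ * A₁)) t := by
  have : @CompleteSpace (Matrix (m ⊕ n) (m ⊕ n) 𝕜) PseudoMetricSpace.toUniformSpace :=
    FiniteDimensional.complete 𝕜 _
  -- `[X; Y]` is the first block column of `exp (u • N) * K`.
  set K : Matrix (m ⊕ n) (m ⊕ n) 𝕜 := fromBlocks 1 0 A₁ 0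
  have hK₁ (M : Matrix (m ⊕ n) (m ⊕ n) 𝕜) :
      (M * K).toBlocks₁₁ = M.toBlocks₁₁ + M.toBlocks₁₂ * A₁ := by
    simp [K, toBlocks₁₁_mul]
  have hK₂ (M : Matrix (m ⊕ n) (m ⊕ n) 𝕜) :
      (M * K).toBlocks₂₁ = M.toBlocks₂₁ + M.toBlocks₂₂ * A₁ := by
    simp [K, toBlocks₂₁_mul]
  have hEK := ((hasDerivAt_exp_smul_const' N t).mul_const K).matrix_toBlocks₁₁
  rw [Matrix.mul_assoc, toBlocks₁₁_mul, hK₁, hK₂] at hEK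
  simp only [hK₁] at hEK
  exact hEK

theorem hasDerivAt_inv_transpose_mul {X : 𝕜 → Matrix n n 𝕜} {σ Y B₁ : Matrix n n 𝕜} {κ t : 𝕜}
    (hX : HasDerivAt X (κ • Y - σ * X t) t) (hu : IsUnit (X t)) :
    HasDerivAt (fun u => (X u)⁻¹ᵀ * B₁)
      (σᵀ * ((X t)⁻¹ᵀ * B₁) - κ • ((Y * (X t)⁻¹)ᵀ * ((X t)⁻¹ᵀ * B₁))) t := by
  refine (((hX.matrix_inv hu).matrix_transpose).mul_const B₁).congr_deriv ?_
  have hXX : X t * (X t)⁻¹ = 1 := mul_nonsing_inv _ ((isUnit_iff_isUnit_det _).mp hu)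
  calc (-((X t)⁻¹ * (κ • Y - σ * X t) * (X t)⁻¹))ᵀ * B₁
      = ((X t)⁻¹ * σ * (X t * (X t)⁻¹) - κ • ((X t)⁻¹ * Y * (X t)⁻¹))ᵀ * B₁ := by
        simp only [Matrix.mul_sub, Matrix.sub_mul, neg_sub, Matrix.mul_smul, Matrix.smul_mul,
          Matrix.mul_assoc]
    _ = σᵀ * ((X t)⁻¹ᵀ * B₁) - κ • ((Y * (X t)⁻¹)ᵀ * ((X t)⁻¹ᵀ * B₁)) := by
        simp only [hXX, transpose_sub, transpose_smul, transpose_mul, Matrix.mul_one,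
          Matrix.sub_mul, Matrix.smul_mul, Matrix.mul_assoc]

end MatrixCalculus

theorem linear_coefficient_from_block_matrix_exponential_general
    (d : ℕ) (σ β A₁ B₁ : Matrix (Fin d) (Fin d) ℝ) (κ : ℝ)
    (H : Matrix (Fin d ⊕ Fin d) (Fin d ⊕ Fin d) ℝ)
    (hH : H = Matrix.fromBlocks σ (-(κ • (1 : Matrix (Fin d) (Fin d) ℝ)))
      (-β) (-σ.transpose))
    (Φ₁₁ Φ₁₂ Φ₂₁ Φ₂₂ : ℝ → Matrix (Fin d) (Fin d) ℝ)
    (hΦ₁₁ : ∀ τ : ℝ, Φ₁₁ τ = (NormedSpace.exp (-(τ • H))).toBlocks₁₁)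
    (hΦ₁₂ : ∀ τ : ℝ, Φ₁₂ τ = (NormedSpace.exp (-(τ • H))).toBlocks₁₂)
    (hΦ₂₁ : ∀ τ : ℝ, Φ₂₁ τ = (NormedSpace.exp (-(τ • H))).toBlocks₂₁)
    (hΦ₂₂ : ∀ τ : ℝ, Φ₂₂ τ = (NormedSpace.exp (-(τ • H))).toBlocks₂₂)
    (X Y : ℝ → Matrix (Fin d) (Fin d) ℝ)
    (hX : X = fun τ => Φ₁₁ τ + Φ₁₂ τ * A₁)
    (hY : Y = fun τ => Φ₂₁ τ + Φ₂₂ τ * A₁)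
    (s : Set ℝ)
    (hinv : ∀ τ ∈ s, IsUnit (X τ))
    (A : ℝ → Matrix (Fin d) (Fin d) ℝ) (hA : A = fun τ => Y τ * (X τ)⁻¹)
    (B : ℝ → Matrix (Fin d) (Fin d) ℝ) (hB : B = fun τ => ((X τ)⁻¹).transpose * B₁) :
    B 0 = B₁ ∧
    ∀ τ ∈ s, ∀ i j, HasDerivAt (fun u => B u i j)
      ((σ.transpose * B τ - κ • ((A τ).transpose * B τ)) i j) τ := by
  have hXexp : X = fun u => (exp (u • -H)).toBlocks₁₁ + (exp (u • -H)).toBlocks₁₂ * A₁ := by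
    simp only [hX, hΦ₁₁, hΦ₁₂, smul_neg]
  have hYexp : Y = fun u => (exp (u • -H)).toBlocks₂₁ + (exp (u • -H)).toBlocks₂₂ * A₁ := by
    simp only [hY, hΦ₂₁, hΦ₂₂, smul_neg]
  have hN₁₁ : (-H).toBlocks₁₁ = -σ := by rw [hH, fromBlocks_neg, toBlocks_fromBlocks₁₁]
  have hN₁₂ : (-H).toBlocks₁₂ = κ • 1 := by
    rw [hH, fromBlocks_neg, toBlocks_fromBlocks₁₂, neg_neg]
  have hX' (u : ℝ) : HasDerivAt X (κ • Y u - σ * X u) u := by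
    convert hasDerivAt_exp_smul_toBlocks (-H) A₁ u using 1
    rw [hN₁₁, hN₁₂, hXexp, hYexp, Matrix.neg_mul, Matrix.smul_mul, Matrix.one_mul]
    abel
  refine ⟨?_, fun τ hτ i j => ?_⟩
  · simp only [hB, hXexp, zero_smul, exp_zero, ← fromBlocks_one, toBlocks_fromBlocks₁₁,
      toBlocks_fromBlocks₁₂, Matrix.zero_mul, add_zero, inv_one, transpose_one, Matrix.one_mul]
  · subst hA hB
    exact (hasDerivAt_inv_transpose_mul (hX' τ) (hinv τ hτ)).matrix_entry i j

/-- With `H = [[σ, −κI],[−β, −σᵀ]]`, `Φᵢⱼ(τ)` the `d×d` blocks of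
`exp(−τH)`, `X(τ) = Φ₁₁(τ) + Φ₁₂(τ)A₁`, `Y(τ) = Φ₂₁(τ) + Φ₂₂(τ)A₁`, and
`A(τ) = Y(τ)X(τ)⁻¹`, if `X(τ)` is invertible on an interval containing `0`, then
`B(τ) := (X(τ)⁻¹)ᵀ B₁` is differentiable, satisfies `B(0) = B₁`, and solves the
linear matrix ODE `B'(τ) = σᵀB(τ) − κA(τ)ᵀB(τ)`. -/
theorem linear_coefficient_from_block_matrix_exponential
    (d : ℕ) (σ β A₁ B₁ : Matrix (Fin d) (Fin d) ℝ) (κ : ℝ)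
    (H : Matrix (Fin d ⊕ Fin d) (Fin d ⊕ Fin d) ℝ)
    (hH : H = Matrix.fromBlocks σ (-(κ • (1 : Matrix (Fin d) (Fin d) ℝ)))
      (-β) (-σ.transpose))
    (Φ₁₁ Φ₁₂ Φ₂₁ Φ₂₂ : ℝ → Matrix (Fin d) (Fin d) ℝ)
    (hΦ₁₁ : ∀ τ : ℝ, Φ₁₁ τ = (NormedSpace.exp (-(τ • H))).toBlocks₁₁)
    (hΦ₁₂ : ∀ τ : ℝ, Φ₁₂ τ = (NormedSpace.exp (-(τ • H))).toBlocks₁₂)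
    (hΦ₂₁ : ∀ τ : ℝ, Φ₂₁ τ = (NormedSpace.exp (-(τ • H))).toBlocks₂₁)
    (hΦ₂₂ : ∀ τ : ℝ, Φ₂₂ τ = (NormedSpace.exp (-(τ • H))).toBlocks₂₂)
    (X Y : ℝ → Matrix (Fin d) (Fin d) ℝ)
    (hX : X = fun τ => Φ₁₁ τ + Φ₁₂ τ * A₁)
    (hY : Y = fun τ => Φ₂₁ τ + Φ₂₂ τ * A₁)
    (s : Set ℝ) (hs : s.OrdConnected) (h0 : (0 : ℝ) ∈ s)
    (hinv : ∀ τ ∈ s, IsUnit (X τ))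
    (A : ℝ → Matrix (Fin d) (Fin d) ℝ) (hA : A = fun τ => Y τ * (X τ)⁻¹)
    (B : ℝ → Matrix (Fin d) (Fin d) ℝ) (hB : B = fun τ => ((X τ)⁻¹).transpose * B₁) :
    B 0 = B₁ ∧
    ∀ τ ∈ s, ∀ i j, HasDerivAt (fun u => B u i j)
      ((σ.transpose * B τ - κ • ((A τ).transpose * B τ)) i j) τ :=
  linear_coefficient_from_block_matrix_exponential_general d σ β A₁ B₁ κ H hH Φ₁₁ Φ₁₂ Φ₂₁ Φ₂₂ hΦ₁₁
    hΦ₁₂ hΦ₂₁ hΦ₂₂ X Y hX hY s hinv A hA B hB
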